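/- arXiv:1606.09596 — 4 statements merged into one kernel-verified Lean document; each statement's English description precedes it below -/
import Mathlib

section
/- Let S be a finite set, t : S → ℝ and x : S → ℝ, and let L = {i ∈ S : x i < t i}, O = {i ∈ S : x i = t i}, R = {i ∈ S : x i > t i}. If |R| ≥ |L| + |O| and R is nonempty, then for every ε with 0 < ε ≤ min_{i ∈ R} (x i − t i), we have Σ_{i ∈ S} |t i − (x i − ε)| ≤ Σ_{i ∈ S} |t i − x i|; i.e., shifting all points of S to the left by ε does not increase the total movement. -/
open Finset in
/-- If |R| ≥ |L| + |O| and R is nonempty, then shifting all points of S to the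
left by any admissible ε does not increase the total movement. -/
theorem shift_left_no_increase {ι : Type*} (S : Finset ι) (t x : ι → ℝ)
    (hcard : (S.filter (fun i => x i < t i)).card
        + (S.filter (fun i => x i = t i)).card
        ≤ (S.filter (fun i => x i > t i)).card)
    (hR : (S.filter (fun i => x i > t i)).Nonempty) :
    ∀ ε : ℝ, 0 < ε → (∀ i ∈ S.filter (fun i => x i > t i), ε ≤ x i - t i) →
      ∑ i ∈ S, |t i - (x i - ε)| ≤ ∑ i ∈ S, |t i - x i| := by
  classical
  intro ε hε hεR
  have key : ∀ i ∈ S, |t i - (x i - ε)| ≤ |t i - x i| +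
      (if x i > t i then -ε else ε) := by
    intro i hi
    by_cases h : x i > t i
    · simp only [h, if_pos]
      have h1 : ε ≤ x i - t i := hεR i (Finset.mem_filter.mpr ⟨hi, h⟩)
      rw [abs_of_nonpos (by linarith), abs_of_nonpos (by linarith)]
      linarith
    · simp only [h, if_neg, not_false_iff]
      have : t i - (x i - ε) = (t i - x i) + ε := by ring
      rw [this]
      calc |(t i - x i) + ε| ≤ |t i - x i| + |ε| := abs_add_le _ _
        _ = |t i - x i| + ε := by rw [abs_of_pos hε]
  calc ∑ i ∈ S, |t i - (x i - ε)|
      ≤ ∑ i ∈ S, (|t i - x i| + (if x i > t i then -ε else ε)) :=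
        Finset.sum_le_sum key
    _ = ∑ i ∈ S, |t i - x i| + ∑ i ∈ S, (if x i > t i then -ε else ε) :=
        Finset.sum_add_distrib
    _ ≤ ∑ i ∈ S, |t i - x i| := by
        have hsum : ∑ i ∈ S, (if x i > t i then -ε else ε)
            = (S.filter (fun i => x i > t i)).card • (-ε)
              + (S.filter (fun i => ¬ x i > t i)).card • ε := by
          rw [Finset.sum_ite, Finset.sum_const, Finset.sum_const]
        have hcne : (S.filter (fun i => ¬ x i > t i)).card
            = (S.filter (fun i => x i < t i)).card
              + (S.filter (fun i => x i = t i)).card := by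
          rw [← Finset.card_union_of_disjoint, ← Finset.filter_or]
          · congr 1
            apply Finset.filter_congr
            intro i _
            simp only [not_lt, gt_iff_lt, eq_iff_iff]
            constructor
            · intro h; rcases lt_or_eq_of_le h with h' | h'
              · exact Or.inl h'
              · exact Or.inr h'
            · rintro (h | h)
              · exact le_of_lt h
              · exact le_of_eq h
          · rw [Finset.disjoint_left]
            intro a ha hb
            exact absurd (Finset.mem_filter.mp hb).2 (ne_of_lt (Finset.mem_filter.mp ha).2)
        rw [hsum, hcne]
        have : ((S.filter (fun i => x i < t i)).card
              + (S.filter (fun i => x i = t i)).card : ℝ)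
            ≤ ((S.filter (fun i => x i > t i)).card : ℝ) := by
          exact_mod_cast hcard
        simp only [nsmul_eq_mul]
        push_cast
        nlinarith
end

section
/- Let δ > 0, let t : Fin n → ℝ be strictly increasing (initial configuration), and let x : Fin n → ℝ be strictly increasing with x (k+1) − x k ≥ δ for all consecutive indices. Suppose x has a maximal chain with index interval [i, j] (i.e., x (k+1) − x k = δ for all i ≤ k < j, and this interval cannot be extended), and suppose that for every l with i ≤ l ≤ j the prefix P = {i, …, l} satisfies |{k ∈ P : x k ≤ t k}| > |{k ∈ P : x k > t k}|. Let y : Fin n → ℝ be a strictly increasing δ-independent configuration such that y l < x l for some l with i ≤ l ≤ j, and y k ≥ x k for all k > l. Then y is not optimal: there exists a δ-independent configuration y' with Σ_k |t k − y' k| < Σ_k |t k − y k|. (If some point lies strictly to the left of its position in x, shifting a prefix of the chain of x rightward in y strictly decreases total movement.) -/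
/-- The indices `i ≤ j` delimit a chain of the configuration `x`:
consecutive points with indices in `[i, j]` are at distance exactly `δ`. -/
def IsChainInterval {n : ℕ} (δ : ℝ) (x : Fin n → ℝ) (i j : Fin n) : Prop :=
  i ≤ j ∧ ∀ (k : ℕ) (_hik : (i : ℕ) ≤ k) (hkj : k < (j : ℕ)),
    x ⟨k + 1, Nat.lt_of_le_of_lt hkj j.isLt⟩ - x ⟨k, Nat.lt_trans hkj j.isLt⟩ = δ

/-- The chain delimited by `i ≤ j` is maximal: it cannot be extended to the
left nor to the right. -/
def IsMaximalChain {n : ℕ} (δ : ℝ) (x : Fin n → ℝ) (i j : Fin n) : Prop :=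
  IsChainInterval δ x i j ∧
    ((i : ℕ) = 0 ∨
      ∃ h : (i : ℕ) - 1 < n, x i - x ⟨(i : ℕ) - 1, h⟩ > δ) ∧
    ((j : ℕ) + 1 = n ∨
      ∃ h : (j : ℕ) + 1 < n, x ⟨(j : ℕ) + 1, h⟩ - x j > δ)

open Finset in
/-- If every prefix of a maximal chain of `x` satisfies Property 1
(|L| + |O| > |R|), then any order-preserving independent configuration `y`
placing some chain point strictly to the left of its position in `x` (and all
later points at least as far right as in `x`) is not optimal. -/
theorem left_of_chain_not_optimal (n : ℕ) (δ : ℝ) (hδ : 0 < δ)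
    (t : Fin n → ℝ) (ht : StrictMono t)
    (x : Fin n → ℝ) (hx : StrictMono x)
    (hgap : ∀ (k : ℕ) (h : k + 1 < n),
      x ⟨k + 1, h⟩ - x ⟨k, Nat.lt_of_succ_lt h⟩ ≥ δ)
    (i j : Fin n) (hchain : IsMaximalChain δ x i j)
    (hprefix : ∀ l : Fin n, i ≤ l → l ≤ j →
      ((Finset.Icc i l).filter (fun k => t k < x k)).card
        < ((Finset.Icc i l).filter (fun k => x k ≤ t k)).card)
    (y : Fin n → ℝ) (hy : StrictMono y)
    (hyind : ∀ a b : Fin n, a ≠ b → |y a - y b| ≥ δ)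
    (l : Fin n) (hil : i ≤ l) (hlj : l ≤ j)
    (hyl : y l < x l) (hafter : ∀ k : Fin n, l < k → x k ≤ y k) :
    ∃ y' : Fin n → ℝ, (∀ a b : Fin n, a ≠ b → |y' a - y' b| ≥ δ) ∧
      ∑ k, |t k - y' k| < ∑ k, |t k - y k| := by
  obtain ⟨⟨hij, hchain'⟩, -, -⟩ := hchain
  have hlj' : (l : ℕ) ≤ (j : ℕ) := hlj
  have hil' : (i : ℕ) ≤ (l : ℕ) := hil
  -- gaps of y
  have ygap : ∀ a b : Fin n, a < b → δ ≤ y b - y a := by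
    intro a b hab
    have h1 := hyind b a (ne_of_gt hab)
    rwa [abs_of_pos (by linarith [hy hab] : (0:ℝ) < y b - y a)] at h1
  -- downward induction along the chain
  have key : ∀ d m (hm : m < n), (i : ℕ) ≤ m → m + d = (l : ℕ) →
      x l - y l ≤ x ⟨m, hm⟩ - y ⟨m, hm⟩ := by
    intro d
    induction d with
    | zero =>
      intro m hm _ hml
      have : (⟨m, hm⟩ : Fin n) = l := Fin.ext (by simpa using hml)
      rw [this]
    | succ d ih =>
      intro m hm him hml
      have hm1 : m + 1 < n := Nat.lt_of_le_of_lt (by omega) l.isLt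
      have h1 := ih (m + 1) hm1 (by omega) (by omega)
      have hc : x ⟨m + 1, hm1⟩ - x ⟨m, hm⟩ = δ := hchain' m him (by omega)
      have hg : δ ≤ y ⟨m + 1, hm1⟩ - y ⟨m, hm⟩ := ygap _ _ (by simp [Fin.lt_def])
      linarith
  have hylt : ∀ k : Fin n, i ≤ k → k ≤ l → y k < x k := by
    intro k hik hkl
    have hkl' : (k : ℕ) ≤ (l : ℕ) := hkl
    have hk := key ((l : ℕ) - (k : ℕ)) (k : ℕ) k.isLt hik (by omega)
    simp only [Fin.eta] at hk
    linarith
  have hBG := hprefix l hil hlj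
  have hGne : ((Finset.Icc i l).filter (fun k => x k ≤ t k)).Nonempty :=
    Finset.card_pos.mp (by omega)
  have hGim : (((Finset.Icc i l).filter (fun k => x k ≤ t k)).image
      fun k => t k - y k).Nonempty := hGne.image _
  set ε₁ := (((Finset.Icc i l).filter (fun k => x k ≤ t k)).image
      fun k => t k - y k).min' hGim with hε₁
  have hε₁le : ∀ k ∈ (Finset.Icc i l).filter (fun k => x k ≤ t k),
      ε₁ ≤ t k - y k := fun k hk => Finset.min'_le _ _ (Finset.mem_image_of_mem _ hk)
  have hε₁pos : 0 < ε₁ := by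
    obtain ⟨k, hk, hke⟩ := Finset.mem_image.mp (Finset.min'_mem _ hGim)
    obtain ⟨hkI, hkt⟩ := Finset.mem_filter.mp hk
    obtain ⟨hik, hkl⟩ := Finset.mem_Icc.mp hkI
    have := hylt k hik hkl
    rw [hε₁, ← hke]; linarith
  set ε₂ := if h : (l : ℕ) + 1 < n then y ⟨(l : ℕ) + 1, h⟩ - y l - δ else 1 with hε₂
  have hε₂pos : 0 < ε₂ := by
    rw [hε₂]
    split
    · rename_i h
      have hlt : l < (⟨(l : ℕ) + 1, h⟩ : Fin n) := by simp [Fin.lt_def]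
      have h2 := hafter _ hlt
      have h3 := hgap (l : ℕ) h
      simp only [Fin.eta] at h3
      linarith
    · norm_num
  set ε := min ε₁ ε₂ with hεdef
  have hεpos : 0 < ε := lt_min hε₁pos hε₂pos
  set y' := fun k : Fin n => if i ≤ k ∧ k ≤ l then y k + ε else y k with hy'def
  have claim : ∀ a b : Fin n, a < b → δ ≤ y' b - y' a := by
    intro a b hab
    have hyab := ygap a b hab
    by_cases ha : i ≤ a ∧ a ≤ l
    · by_cases hb : i ≤ b ∧ b ≤ l
      · simp only [hy'def, if_pos ha, if_pos hb]; linarith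
      · have hib : i ≤ b := le_trans ha.1 (le_of_lt hab)
        have hbl : l < b := lt_of_not_ge fun hbl => hb ⟨hib, hbl⟩
        have hbl' : (l : ℕ) < (b : ℕ) := hbl
        have hbn : (l : ℕ) + 1 < n := by have := b.isLt; omega
        have hεle : ε ≤ y ⟨(l : ℕ) + 1, hbn⟩ - y l - δ := by
          have hmin : ε ≤ ε₂ := min_le_right _ _
          rwa [hε₂, dif_pos hbn] at hmin
        have hyb : y ⟨(l : ℕ) + 1, hbn⟩ ≤ y b :=
          hy.monotone (by rw [Fin.le_def]; simpa using hbl')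
        have hya : y a ≤ y l := hy.monotone ha.2
        simp only [hy'def, if_pos ha, if_neg hb]
        linarith
    · by_cases hb : i ≤ b ∧ b ≤ l
      · simp only [hy'def, if_neg ha, if_pos hb]; linarith
      · simp only [hy'def, if_neg ha, if_neg hb]; linarith
  refine ⟨y', ?_, ?_⟩
  · intro a b hab
    rcases lt_or_gt_of_ne hab with h | h
    · have := claim a b h
      rw [abs_sub_comm, abs_of_nonneg (by linarith)]
      linarith
    · have := claim b a h
      rw [abs_of_nonneg (by linarith)]
      linarith
  · have e1 : ∑ k, (|t k - y' k| - |t k - y k|)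
        = ∑ k ∈ Finset.Icc i l, (|t k - y' k| - |t k - y k|) := by
      refine (Finset.sum_subset (Finset.subset_univ _) ?_).symm
      intro k _ hk
      have hk' : ¬(i ≤ k ∧ k ≤ l) := by simpa [Finset.mem_Icc] using hk
      simp [hy'def, hk']
    have eG : ∀ k ∈ (Finset.Icc i l).filter (fun k => x k ≤ t k),
        |t k - y' k| - |t k - y k| = -ε := by
      intro k hk
      obtain ⟨hkI, hkt⟩ := Finset.mem_filter.mp hk
      obtain ⟨hik, hkl⟩ := Finset.mem_Icc.mp hkI
      have h1 := hylt k hik hkl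
      have h2 : ε ≤ t k - y k := le_trans (min_le_left _ _) (hε₁le k hk)
      have h3 : y' k = y k + ε := by simp [hy'def, hik, hkl]
      rw [h3, abs_of_nonneg (by linarith), abs_of_nonneg (by linarith)]
      ring
    have eB : ∀ k ∈ (Finset.Icc i l).filter (fun k => ¬ x k ≤ t k),
        |t k - y' k| - |t k - y k| ≤ ε := by
      intro k hk
      obtain ⟨hkI, hkt⟩ := Finset.mem_filter.mp hk
      obtain ⟨hik, hkl⟩ := Finset.mem_Icc.mp hkI
      have h3 : y' k = y k + ε := by simp [hy'def, hik, hkl]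
      rw [h3]
      calc |t k - (y k + ε)| - |t k - y k|
          ≤ |(t k - (y k + ε)) - (t k - y k)| := abs_sub_abs_le_abs_sub _ _
        _ = ε := by
            rw [show (t k - (y k + ε)) - (t k - y k) = -ε by ring, abs_neg,
              abs_of_pos hεpos]
    have hBeq : (Finset.Icc i l).filter (fun k => ¬ x k ≤ t k)
        = (Finset.Icc i l).filter (fun k => t k < x k) := by
      apply Finset.filter_congr
      intro k _
      simp [not_le]
    have hsum : ∑ k ∈ Finset.Icc i l, (|t k - y' k| - |t k - y k|) < 0 := by
      rw [← Finset.sum_filter_add_sum_filter_not (Finset.Icc i l)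
        (fun k => x k ≤ t k)]
      have s1 : ∑ k ∈ (Finset.Icc i l).filter (fun k => x k ≤ t k),
          (|t k - y' k| - |t k - y k|)
          = -(((Finset.Icc i l).filter (fun k => x k ≤ t k)).card * ε) := by
        rw [Finset.sum_congr rfl eG, Finset.sum_const, nsmul_eq_mul]
        ring
      have s2 : ∑ k ∈ (Finset.Icc i l).filter (fun k => ¬ x k ≤ t k),
          (|t k - y' k| - |t k - y k|)
          ≤ (((Finset.Icc i l).filter (fun k => t k < x k)).card : ℝ) * ε := by
        calc ∑ k ∈ (Finset.Icc i l).filter (fun k => ¬ x k ≤ t k),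
            (|t k - y' k| - |t k - y k|)
            ≤ ((Finset.Icc i l).filter (fun k => ¬ x k ≤ t k)).card • ε :=
              Finset.sum_le_card_nsmul _ _ _ eB
          _ = (((Finset.Icc i l).filter (fun k => t k < x k)).card : ℝ) * ε := by
              rw [hBeq, nsmul_eq_mul]
      have hc : (((Finset.Icc i l).filter (fun k => t k < x k)).card : ℝ) * ε
          < (((Finset.Icc i l).filter (fun k => x k ≤ t k)).card : ℝ) * ε := by
        exact mul_lt_mul_of_pos_right (by exact_mod_cast hBG) hεpos
      linarith
    have : ∑ k, (|t k - y' k| - |t k - y k|) < 0 := by rw [e1]; exact hsum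
    rw [Finset.sum_sub_distrib] at this
    linarith
end

section
/- Let δ > 0, let t : Fin n → ℝ be strictly increasing (initial configuration), and let x : Fin n → ℝ be strictly increasing with x (k+1) − x k ≥ δ for all consecutive indices. Suppose that for every maximal chain of x with index interval [i, j] and every l with i ≤ l ≤ j, the suffix S = {l, …, j} satisfies |{k ∈ S : x k < t k}| ≤ |{k ∈ S : x k ≥ t k}|. Let y : Fin n → ℝ be any δ-independent, strictly increasing configuration with y k ≥ x k for all k. Then Σ_k |t k − x k| ≤ Σ_k |t k − y k|. (Among order-preserving independent configurations lying pointwise to the right of x, the configuration x has minimal total movement.) -/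
open Finset

theorem sum_mul_sum_nonneg_of_sum_nonneg {ι R : Type*} [Fintype ι] [CommSemiring R]
    [PartialOrder R] [IsOrderedRing R] (P S : ι → Finset ι) (hPS : ∀ l k, l ∈ P k ↔ k ∈ S l)
    (a b : ι → R) (ha : ∀ l, 0 ≤ a l) (hb : ∀ l, 0 ≤ ∑ k ∈ S l, b k) :
    0 ≤ ∑ k, b k * ∑ l ∈ P k, a l := by
  calc 0 ≤ ∑ l, a l * ∑ k ∈ S l, b k := sum_nonneg fun l _ => mul_nonneg (ha l) (hb l)
    _ = ∑ k, b k * ∑ l ∈ P k, a l := by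
      simp_rw [mul_sum]
      rw [sum_comm' (t' := univ) (s' := P) (fun l k => by simp [hPS])]
      simp_rw [mul_comm]

theorem abs_sub_add_sign_mul_le {α : Type*} [CommRing α] [LinearOrder α] [IsStrictOrderedRing α]
    {t a b : α} (hab : a ≤ b) :
    |t - a| + (if t ≤ a then 1 else -1) * (b - a) ≤ |t - b| := by
  split_ifs with hta
  · rw [abs_of_nonpos (by linarith), abs_of_nonpos (by linarith)]
    linarith
  · linarith [abs_sub_le t b a, abs_of_nonneg (sub_nonneg.2 hab)]

section Chains

variable {n : ℕ} {δ : ℝ} {x : Fin n → ℝ}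

theorem isChainInterval_self (l : Fin n) : IsChainInterval δ x l l :=
  ⟨le_rfl, fun _ h₁ h₂ => absurd h₂ (by omega)⟩

theorem IsChainInterval.trans {i l j : Fin n} (hil : IsChainInterval δ x i l)
    (hlj : IsChainInterval δ x l j) : IsChainInterval δ x i j :=
  ⟨hil.1.trans hlj.1, fun k hik hkj =>
    if hkl : k < l then hil.2 k hik hkl else hlj.2 k (Nat.le_of_not_lt hkl) hkj⟩

theorem IsChainInterval.mono {i j l k : Fin n} (h : IsChainInterval δ x i j) (hil : i ≤ l)
    (hlk : l ≤ k) (hkj : k ≤ j) : IsChainInterval δ x l k :=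
  ⟨hlk, fun r hlr hrk => h.2 r (by omega) (by omega)⟩

theorem isChainInterval_iff_of_val_eq_succ {l p k : Fin n} (hk : (k : ℕ) = p + 1) :
    IsChainInterval δ x l k ↔ l = k ∨ (IsChainInterval δ x l p ∧ x k - x p = δ) := by
  have hpk : (⟨p + 1, by omega⟩ : Fin n) = k := Fin.ext hk.symm
  constructor
  · rintro ⟨hlk, h⟩
    refine or_iff_not_imp_left.2 fun hne => ⟨⟨?_, fun r hlr hrp => h r hlr (by omega)⟩, ?_⟩
    · have := Fin.val_ne_of_ne hne; omega
    · simpa [hpk] using h p (by omega) (by omega)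
  · rintro (rfl | ⟨⟨hlp, h⟩, hgap⟩)
    · exact isChainInterval_self l
    · refine ⟨by omega, fun r hlr hrk => ?_⟩
      rcases Nat.lt_or_ge r p with hrp | hrp
      · exact h r hlr hrp
      · obtain rfl : r = p := by omega
        simpa [hpk] using hgap

theorem IsMaximalChain.isChainInterval_iff {i j l k : Fin n} (h : IsMaximalChain δ x i j)
    (hil : i ≤ l) (hlj : l ≤ j) : IsChainInterval δ x l k ↔ l ≤ k ∧ k ≤ j := by
  refine ⟨fun hlk => ⟨hlk.1, not_lt.1 fun hjk => ?_⟩,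
    fun hk => h.1.mono hil hk.1 hk.2⟩
  obtain hj | ⟨hj, hgt⟩ := h.2.2
  · omega
  · have := hlk.2 j hlj (by omega)
    simp only [Fin.eta] at this
    linarith

variable (δ x) in
open Classical in
noncomputable def chainPrefix (k : Fin n) : Finset (Fin n) :=
  {l | IsChainInterval δ x l k}

variable (δ x) in
open Classical in
noncomputable def chainSuffix (l : Fin n) : Finset (Fin n) :=
  {k | IsChainInterval δ x l k}

theorem mem_chainPrefix {l k : Fin n} : l ∈ chainPrefix δ x k ↔ IsChainInterval δ x l k := by
  simp [chainPrefix]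

theorem mem_chainSuffix {l k : Fin n} : k ∈ chainSuffix δ x l ↔ IsChainInterval δ x l k := by
  simp [chainSuffix]

theorem le_sub_of_val_eq_succ
    (hgap : ∀ (k : ℕ) (h : k + 1 < n), x ⟨k + 1, h⟩ - x ⟨k, Nat.lt_of_succ_lt h⟩ ≥ δ)
    {p k : Fin n} (hk : (k : ℕ) = p + 1) : δ ≤ x k - x p := by
  obtain ⟨k, hkn⟩ := k
  obtain ⟨p, hpn⟩ := p
  obtain rfl : k = p + 1 := hk
  exact hgap p hkn

theorem exists_isMaximalChain
    (hgap : ∀ (k : ℕ) (h : k + 1 < n), x ⟨k + 1, h⟩ - x ⟨k, Nat.lt_of_succ_lt h⟩ ≥ δ)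
    (l : Fin n) : ∃ i j, IsMaximalChain δ x i j ∧ i ≤ l ∧ l ≤ j := by
  set i := (chainPrefix δ x l).min' ⟨l, mem_chainPrefix.2 (isChainInterval_self l)⟩
  set j := (chainSuffix δ x l).max' ⟨l, mem_chainSuffix.2 (isChainInterval_self l)⟩
  have hi : IsChainInterval δ x i l := mem_chainPrefix.1 (min'_mem _ _)
  have hj : IsChainInterval δ x l j := mem_chainSuffix.1 (max'_mem _ _)
  refine ⟨i, j, ⟨hi.trans hj, or_iff_not_imp_left.2 fun hi0 => ⟨by omega, ?_⟩,
    or_iff_not_imp_left.2 fun hjn => ⟨by omega, ?_⟩⟩, hi.1, hj.1⟩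
  · set p : Fin n := ⟨i - 1, by omega⟩
    have hip : (i : ℕ) = p + 1 := by dsimp only [p]; omega
    refine (le_sub_of_val_eq_succ hgap hip).lt_of_ne fun hlink => ?_
    have hpi : IsChainInterval δ x p i :=
      (isChainInterval_iff_of_val_eq_succ hip).2 (.inr ⟨isChainInterval_self p, hlink.symm⟩)
    have hle : i ≤ p := min'_le _ _ (mem_chainPrefix.2 (hpi.trans hi))
    rw [Fin.le_iff_val_le_val] at hle
    omega
  · set k : Fin n := ⟨j + 1, by omega⟩
    have hkj : (k : ℕ) = j + 1 := rfl
    refine (le_sub_of_val_eq_succ hgap hkj).lt_of_ne fun hlink => ?_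
    have hjk : IsChainInterval δ x j k :=
      (isChainInterval_iff_of_val_eq_succ hkj).2 (.inr ⟨isChainInterval_self j, hlink.symm⟩)
    have hle : k ≤ j := le_max' _ _ (mem_chainSuffix.2 (hj.trans hjk))
    rw [Fin.le_iff_val_le_val] at hle
    omega

theorem sum_sign_chainSuffix_nonneg
    (hgap : ∀ (k : ℕ) (h : k + 1 < n), x ⟨k + 1, h⟩ - x ⟨k, Nat.lt_of_succ_lt h⟩ ≥ δ)
    {t : Fin n → ℝ}
    (hsuffix : ∀ i j : Fin n, IsMaximalChain δ x i j → ∀ l : Fin n, i ≤ l → l ≤ j →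
      #{k ∈ Icc l j | x k < t k} ≤ #{k ∈ Icc l j | t k ≤ x k})
    (l : Fin n) : 0 ≤ ∑ k ∈ chainSuffix δ x l, (if t k ≤ x k then 1 else -1 : ℝ) := by
  obtain ⟨i, j, hmax, hil, hlj⟩ := exists_isMaximalChain hgap l
  have hS : chainSuffix δ x l = Icc l j := by
    ext k
    rw [mem_chainSuffix, hmax.isChainInterval_iff hil hlj, mem_Icc]
  have hcard : (#{k ∈ Icc l j | x k < t k} : ℝ) ≤ #{k ∈ Icc l j | t k ≤ x k} := by
    exact_mod_cast hsuffix i j hmax l hil hlj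
  rw [hS, sum_ite]
  simp only [not_le, sum_const, nsmul_eq_mul, mul_one, mul_neg]
  linarith

variable (δ x) in
noncomputable def chainIncrement (d : Fin n → ℝ) (l : Fin n) : ℝ :=
  if (l : ℕ) ≠ 0 ∧ x l - x ⟨l - 1, by omega⟩ = δ then d l - d ⟨l - 1, by omega⟩ else d l

variable {d : Fin n → ℝ} {p k : Fin n}

theorem chainIncrement_of_val_eq_zero (hk : (k : ℕ) = 0) : chainIncrement δ x d k = d k := by
  simp [chainIncrement, hk]

theorem chainIncrement_of_val_eq_succ (hk : (k : ℕ) = p + 1) :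
    chainIncrement δ x d k = if x k - x p = δ then d k - d p else d k := by
  obtain ⟨k, hkn⟩ := k
  obtain ⟨p, hpn⟩ := p
  obtain rfl : k = p + 1 := hk
  simp [chainIncrement]

theorem chainPrefix_of_val_eq_zero (hk : (k : ℕ) = 0) : chainPrefix δ x k = {k} := by
  ext l
  rw [mem_chainPrefix, mem_singleton]
  refine ⟨fun h => ?_, by rintro rfl; exact isChainInterval_self l⟩
  have := h.1
  omega

theorem chainPrefix_of_val_eq_succ (hk : (k : ℕ) = p + 1) :
    chainPrefix δ x k = if x k - x p = δ then insert k (chainPrefix δ x p) else {k} := by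
  ext l
  split_ifs with hlink <;>
    simp [mem_chainPrefix, isChainInterval_iff_of_val_eq_succ hk, hlink]

theorem sum_chainIncrement : ∑ l ∈ chainPrefix δ x k, chainIncrement δ x d l = d k := by
  obtain ⟨m, hm⟩ : ∃ m, (k : ℕ) = m := ⟨_, rfl⟩
  induction m generalizing k with
  | zero => rw [chainPrefix_of_val_eq_zero hm, sum_singleton, chainIncrement_of_val_eq_zero hm]
  | succ m ih =>
    set p : Fin n := ⟨m, by omega⟩
    have hkp : (k : ℕ) = p + 1 := hm
    rw [chainPrefix_of_val_eq_succ hkp]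
    split_ifs with hlink
    · have hk : k ∉ chainPrefix δ x p := fun hk => by
        have := (mem_chainPrefix.1 hk).1
        omega
      rw [sum_insert hk, ih (k := p) rfl, chainIncrement_of_val_eq_succ hkp, if_pos hlink]
      ring
    · rw [sum_singleton, chainIncrement_of_val_eq_succ hkp, if_neg hlink]

theorem chainIncrement_nonneg (hd₀ : ∀ l, 0 ≤ d l)
    (hd : ∀ p k : Fin n, (k : ℕ) = p + 1 → x k - x p = δ → d p ≤ d k) (l : Fin n) :
    0 ≤ chainIncrement δ x d l := by
  obtain hl | hl : (l : ℕ) = 0 ∨ (l : ℕ) = (⟨l - 1, by omega⟩ : Fin n) + 1 := by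
    show (l : ℕ) = 0 ∨ (l : ℕ) = l - 1 + 1
    omega
  · rw [chainIncrement_of_val_eq_zero hl]
    exact hd₀ l
  · rw [chainIncrement_of_val_eq_succ hl]
    split_ifs with hlink
    · exact sub_nonneg.2 (hd _ _ hl hlink)
    · exact hd₀ l

end Chains

theorem le_sub_of_strictMono_of_separated {ι : Type*} [Preorder ι] {δ : ℝ} {y : ι → ℝ}
    (hy : StrictMono y) (hsep : ∀ a b : ι, a ≠ b → |y a - y b| ≥ δ) {p k : ι} (hpk : p < k) :
    δ ≤ y k - y p := by
  simpa [abs_of_pos (sub_pos.2 (hy hpk))] using hsep k p hpk.ne'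

open Finset in
theorem optimal_among_rightward_general (n : ℕ) (δ : ℝ) (t : Fin n → ℝ) (x : Fin n → ℝ)
    (hgap : ∀ (k : ℕ) (h : k + 1 < n),
      x ⟨k + 1, h⟩ - x ⟨k, Nat.lt_of_succ_lt h⟩ ≥ δ)
    (hsuffix : ∀ i j : Fin n, IsMaximalChain δ x i j →
      ∀ l : Fin n, i ≤ l → l ≤ j →
        ((Finset.Icc l j).filter (fun k => x k < t k)).card
          ≤ ((Finset.Icc l j).filter (fun k => t k ≤ x k)).card)
    (y : Fin n → ℝ) (hy : StrictMono y)
    (hyind : ∀ a b : Fin n, a ≠ b → |y a - y b| ≥ δ)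
    (hxy : ∀ k : Fin n, x k ≤ y k) :
    ∑ k, |t k - x k| ≤ ∑ k, |t k - y k| := by
  set d : Fin n → ℝ := fun k => y k - x k
  have hd : ∀ l, 0 ≤ chainIncrement δ x d l :=
    chainIncrement_nonneg (fun l => sub_nonneg.2 (hxy l)) fun p k hk hlink => by
      linarith [le_sub_of_strictMono_of_separated hy hyind (show p < k by omega)]
  have hmove : 0 ≤ ∑ k, (if t k ≤ x k then 1 else -1) * d k := by
    simpa only [sum_chainIncrement] using
      sum_mul_sum_nonneg_of_sum_nonneg (chainPrefix δ x) (chainSuffix δ x)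
        (fun _ _ => mem_chainPrefix.trans mem_chainSuffix.symm) _ _ hd
        (sum_sign_chainSuffix_nonneg hgap hsuffix)
  calc ∑ k, |t k - x k|
      ≤ ∑ k, (|t k - x k| + (if t k ≤ x k then 1 else -1) * d k) := by
        rw [sum_add_distrib]
        linarith
    _ ≤ ∑ k, |t k - y k| := sum_le_sum fun k _ => abs_sub_add_sign_mul_le (hxy k)

open Finset in
/-- If every suffix of every maximal chain of `x` satisfies Property 2
(|L| ≤ |O| + |R|), then `x` has minimal total movement among all
order-preserving independent configurations lying pointwise to its right. -/
theorem optimal_among_rightward (n : ℕ) (δ : ℝ) (hδ : 0 < δ)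
    (t : Fin n → ℝ) (ht : StrictMono t)
    (x : Fin n → ℝ) (hx : StrictMono x)
    (hgap : ∀ (k : ℕ) (h : k + 1 < n),
      x ⟨k + 1, h⟩ - x ⟨k, Nat.lt_of_succ_lt h⟩ ≥ δ)
    (hsuffix : ∀ i j : Fin n, IsMaximalChain δ x i j →
      ∀ l : Fin n, i ≤ l → l ≤ j →
        ((Finset.Icc l j).filter (fun k => x k < t k)).card
          ≤ ((Finset.Icc l j).filter (fun k => t k ≤ x k)).card)
    (y : Fin n → ℝ) (hy : StrictMono y)
    (hyind : ∀ a b : Fin n, a ≠ b → |y a - y b| ≥ δ)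
    (hxy : ∀ k : Fin n, x k ≤ y k) :
    ∑ k, |t k - x k| ≤ ∑ k, |t k - y k| :=
  optimal_among_rightward_general n δ t x hgap hsuffix y hy hyind hxy
end

section
/- Let δ > 0, let t : Fin n → ℝ be strictly increasing (initial configuration), and let x : Fin n → ℝ be strictly increasing with x (k+1) − x k ≥ δ for all consecutive indices (hence δ-independent). Suppose that for every maximal chain of x with index interval [i, j]: (a) for every l with i ≤ l ≤ j, the prefix P = {i, …, l} satisfies |{k ∈ P : x k ≤ t k}| > |{k ∈ P : x k > t k}|; and (b) for every l with i ≤ l ≤ j, the suffix S = {l, …, j} satisfies |{k ∈ S : x k < t k}| ≤ |{k ∈ S : x k ≥ t k}|. Then x is an optimal solution of the movement-to-independence problem: for every δ-independent configuration y : Fin n → ℝ (not necessarily order-preserving), Σ_k |t k − x k| ≤ Σ_k |t k − y k|. -/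
/-!
Sorting a competitor `y` never increases its movement (swapping an inverted pair is an exchange
against the Monge inequality `|a - v| + |b - u| ≤ |a - u| + |b - v|` for `a ≤ b`, `v ≤ u`), so it
suffices to compare `x` with a strictly increasing `δ`-separated `z`. Along a maximal chain of `x`
the points are exactly `δ` apart while those of `z` are at least `δ` apart, hence `z - x` is
nondecreasing there and the chain splits into a prefix where `z < x` and a suffix where `x ≤ z`.
On the prefix, the saving `|t k - x k| - |t k - z k|` is at most `±(x k - z k)` with sign `+`
exactly when `t k < x k`; Abel summation against the nonincreasing weights `x - z ≥ 0` and
Property 1 make the total saving nonpositive. The suffix is symmetric, using Property 2, and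
summing over the maximal chains finishes the proof.
-/

open Finset Equiv

theorem abs_sub_add_abs_sub_le_abs_sub_add_abs_sub {a b u v : ℝ} (hab : a ≤ b) (hvu : v ≤ u) :
    |a - v| + |b - u| ≤ |a - u| + |b - v| := by
  rcases abs_cases (a - v) with ⟨h1, _⟩ | ⟨h1, _⟩ <;>
  rcases abs_cases (b - u) with ⟨h2, _⟩ | ⟨h2, _⟩ <;>
  rcases abs_cases (a - u) with ⟨h3, _⟩ | ⟨h3, _⟩ <;>
  rcases abs_cases (b - v) with ⟨h4, _⟩ | ⟨h4, _⟩ <;>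
  linarith

theorem Fintype.sum_apply_swap_add {ι β : Type*} [Fintype ι] [DecidableEq ι] (F : ι → β → ℝ)
    (v : ι → β) {a b : ι} (hab : a ≠ b) :
    ∑ k, F k (v (swap a b k)) + (F a (v a) + F b (v b))
      = ∑ k, F k (v k) + (F a (v b) + F b (v a)) := by
  have h := Fintype.sum_eq_add (f := fun k => F k (v (swap a b k)) - F k (v k)) a b hab
    fun k hk => by simp only [swap_apply_of_ne_of_ne hk.1 hk.2, sub_self]
  simp only [sum_sub_distrib, swap_apply_left, swap_apply_right] at h
  linarith

theorem exists_perm_strictMono_sum_abs_sub_le {n : ℕ} {t y : Fin n → ℝ} (ht : Monotone t)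
    (hy : Function.Injective y) :
    ∃ σ : Perm (Fin n), StrictMono (y ∘ σ) ∧ ∑ k, |t k - y (σ k)| ≤ ∑ k, |t k - y k| := by
  classical
  let cost (σ : Perm (Fin n)) := ∑ k, |t k - y (σ k)|
  obtain ⟨σ, hσS, hσmax⟩ := (univ.filter fun σ => cost σ ≤ cost 1).exists_max_image
    (fun σ => ∑ k : Fin n, ((k : ℕ) : ℝ) * y (σ k)) ⟨1, by simp⟩
  have hσ : cost σ ≤ cost 1 := (mem_filter.1 hσS).2
  -- Swapping an inverted pair does not increase the cost but strictly increases the weight.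
  have hmono : Monotone (y ∘ σ) := by
    intro a b hle
    by_contra! hinv
    have hab : a < b := hle.lt_of_ne (by rintro rfl; exact lt_irrefl _ hinv)
    have hcost := Fintype.sum_apply_swap_add (fun k w => |t k - w|) (y ∘ σ) hab.ne
    have hweight :=
      Fintype.sum_apply_swap_add (fun (k : Fin n) w => ((k : ℕ) : ℝ) * w) (y ∘ σ) hab.ne
    have hfour := abs_sub_add_abs_sub_le_abs_sub_add_abs_sub (ht hab.le) hinv.le
    have hgain : 0 < ((b : ℕ) - (a : ℕ) : ℝ) * (y (σ a) - y (σ b)) :=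
      mul_pos (sub_pos.2 (by exact_mod_cast hab)) (sub_pos.2 hinv)
    simp only [Function.comp_apply] at hinv hcost hweight hfour
    have := hσmax (σ * swap a b) (mem_filter.2 ⟨mem_univ _, le_trans (by
      simp only [cost, Perm.mul_apply]
      linarith) hσ⟩)
    simp only [Perm.mul_apply] at this
    linarith
  exact ⟨σ, hmono.strictMono_of_injective (hy.comp σ.injective), hσ⟩

theorem sum_ite_one_neg_one_nonpos {α : Type*} {s : Finset α} {p : α → Prop} [DecidablePred p]
    (h : #{k ∈ s | p k} ≤ #{k ∈ s | ¬p k}) : ∑ k ∈ s, (if p k then (1 : ℝ) else -1) ≤ 0 := by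
  rw [sum_ite, sum_const, sum_const]
  simpa using (Nat.cast_le (α := ℝ)).2 h

theorem abs_sub_sub_abs_sub_le_ite_mul (t x z : ℝ) :
    |t - x| - |t - z| ≤ (if t < x then 1 else -1) * (x - z) := by
  split_ifs with h
  · rw [abs_sub_comm, abs_of_pos (sub_pos.2 h)]
    linarith [neg_abs_le (t - z)]
  · rw [abs_of_nonneg (sub_nonneg.2 (not_lt.1 h))]
    linarith [le_abs_self (t - z)]

theorem abs_sub_sub_abs_sub_le_ite_mul' (t x z : ℝ) :
    |t - x| - |t - z| ≤ (if x < t then 1 else -1) * (z - x) := by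
  split_ifs with h
  · rw [abs_of_pos (sub_pos.2 h)]
    linarith [le_abs_self (t - z)]
  · rw [abs_sub_comm, abs_of_nonneg (sub_nonneg.2 (not_lt.1 h))]
    linarith [neg_abs_le (t - z)]

section

variable {α : Type*} [LinearOrder α]

theorem sum_mul_le_of_antitoneOn (s : Finset α) {ε g : α → ℝ} {c : ℝ} (hg : AntitoneOn g s)
    (hε : ∀ m ∈ s, ∑ k ∈ s with k ≤ m, ε k ≤ 0) (hc : ∀ k ∈ s, c ≤ g k) :
    ∑ k ∈ s, ε k * g k ≤ (∑ k ∈ s, ε k) * c := by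
  induction s using Finset.induction_on_max generalizing c with
  | empty => simp
  | insert a s ha ih =>
    have has : a ∉ s := fun h => lt_irrefl a (ha a h)
    have hεs : ∀ m ∈ s, ∑ k ∈ s with k ≤ m, ε k ≤ 0 := fun m hm => by
      simpa [filter_insert, (ha m hm).not_ge] using hε m (mem_insert_of_mem hm)
    have hs : ∑ k ∈ s, ε k * g k ≤ (∑ k ∈ s, ε k) * g a :=
      ih (hg.mono (by simp)) hεs fun k hk => hg (by simp [hk]) (by simp) (ha k hk).le
    have htotal : ε a + ∑ k ∈ s, ε k ≤ 0 := by
      simpa [filter_insert, has, filter_true_of_mem fun k hk => (ha k hk).le] using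
        hε a (mem_insert_self a s)
    rw [sum_insert has, sum_insert has]
    calc ε a * g a + ∑ k ∈ s, ε k * g k ≤ (ε a + ∑ k ∈ s, ε k) * g a := by linarith
      _ ≤ (ε a + ∑ k ∈ s, ε k) * c := mul_le_mul_of_nonpos_left (hc a (mem_insert_self a s)) htotal

theorem sum_mul_le_of_monotoneOn (s : Finset α) {ε g : α → ℝ} {c : ℝ} (hg : MonotoneOn g s)
    (hε : ∀ m ∈ s, ∑ k ∈ s with m ≤ k, ε k ≤ 0) (hc : ∀ k ∈ s, c ≤ g k) :
    ∑ k ∈ s, ε k * g k ≤ (∑ k ∈ s, ε k) * c :=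
  sum_mul_le_of_antitoneOn (α := αᵒᵈ) s hg.dual_left hε hc

theorem sum_abs_sub_sub_abs_sub_nonpos_of_antitoneOn (s : Finset α)
    {t x z : α → ℝ} (hd : AntitoneOn (x - z) s) (hzx : ∀ k ∈ s, z k ≤ x k)
    (hε : ∀ m ∈ s, ∑ k ∈ s with k ≤ m, (if t k < x k then (1 : ℝ) else -1) ≤ 0) :
    ∑ k ∈ s, (|t k - x k| - |t k - z k|) ≤ 0 :=
  calc ∑ k ∈ s, (|t k - x k| - |t k - z k|)
      ≤ ∑ k ∈ s, (if t k < x k then 1 else -1) * (x k - z k) :=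
        sum_le_sum fun _ _ => abs_sub_sub_abs_sub_le_ite_mul _ _ _
    _ ≤ (∑ k ∈ s, if t k < x k then 1 else -1) * 0 :=
        sum_mul_le_of_antitoneOn s hd hε fun k hk => sub_nonneg.2 (hzx k hk)
    _ = 0 := mul_zero _

theorem sum_abs_sub_sub_abs_sub_nonpos_of_monotoneOn (s : Finset α)
    {t x z : α → ℝ} (hd : MonotoneOn (z - x) s) (hxz : ∀ k ∈ s, x k ≤ z k)
    (hε : ∀ m ∈ s, ∑ k ∈ s with m ≤ k, (if x k < t k then (1 : ℝ) else -1) ≤ 0) :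
    ∑ k ∈ s, (|t k - x k| - |t k - z k|) ≤ 0 :=
  calc ∑ k ∈ s, (|t k - x k| - |t k - z k|)
      ≤ ∑ k ∈ s, (if x k < t k then 1 else -1) * (z k - x k) :=
        sum_le_sum fun _ _ => abs_sub_sub_abs_sub_le_ite_mul' _ _ _
    _ ≤ (∑ k ∈ s, if x k < t k then 1 else -1) * 0 :=
        sum_mul_le_of_monotoneOn s hd hε fun k hk => sub_nonneg.2 (hxz k hk)
    _ = 0 := mul_zero _

theorem sum_abs_sub_le_of_monotoneOn_sub [LocallyFiniteOrder α] {i j : α} {t x z : α → ℝ}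
    (hd : MonotoneOn (z - x) (Set.Icc i j))
    (hpre : ∀ l, i ≤ l → l ≤ j → #{k ∈ Icc i l | t k < x k} ≤ #{k ∈ Icc i l | x k ≤ t k})
    (hsuf : ∀ l, i ≤ l → l ≤ j → #{k ∈ Icc l j | x k < t k} ≤ #{k ∈ Icc l j | t k ≤ x k}) :
    ∑ k ∈ Icc i j, |t k - x k| ≤ ∑ k ∈ Icc i j, |t k - z k| := by
  have hd' : ∀ a ∈ Icc i j, ∀ b ∈ Icc i j, a ≤ b → z a - x a ≤ z b - x b := fun a ha b hb hab =>
    hd (coe_Icc i j ▸ ha) (coe_Icc i j ▸ hb) hab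
  set L := (Icc i j).filter fun k => z k < x k
  set R := (Icc i j).filter fun k => ¬z k < x k
  have hL : ∀ m ∈ L, L.filter (· ≤ m) = Icc i m := by
    intro m hm
    simp only [L, mem_filter, mem_Icc] at hm
    ext k
    simp only [L, mem_filter, mem_Icc]
    refine ⟨fun hk => ⟨hk.1.1.1, hk.2⟩, fun hk => ⟨⟨⟨hk.1, hk.2.trans hm.1.2⟩, ?_⟩, hk.2⟩⟩
    linarith [hd' k (mem_Icc.2 ⟨hk.1, hk.2.trans hm.1.2⟩) m (mem_Icc.2 hm.1) hk.2]
  have hR : ∀ m ∈ R, R.filter (m ≤ ·) = Icc m j := by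
    intro m hm
    simp only [R, mem_filter, mem_Icc, not_lt] at hm
    ext k
    simp only [R, mem_filter, mem_Icc, not_lt]
    refine ⟨fun hk => ⟨hk.2, hk.1.1.2⟩, fun hk => ⟨⟨⟨hm.1.1.trans hk.1, hk.2⟩, ?_⟩, hk.1⟩⟩
    linarith [hd' m (mem_Icc.2 hm.1) k (mem_Icc.2 ⟨hm.1.1.trans hk.1, hk.2⟩) hk.1]
  rw [← sub_nonpos, ← sum_sub_distrib, ← sum_filter_add_sum_filter_not _ fun k => z k < x k]
  refine add_nonpos (sum_abs_sub_sub_abs_sub_nonpos_of_antitoneOn L (fun a ha b hb hab => ?_)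
    (fun k hk => (mem_filter.1 hk).2.le) fun m hm => ?_)
    (sum_abs_sub_sub_abs_sub_nonpos_of_monotoneOn R (fun a ha b hb hab => ?_)
    (fun k hk => not_lt.1 (mem_filter.1 hk).2) fun m hm => ?_)
  · simp only [Pi.sub_apply]
    linarith [hd' a (mem_filter.1 ha).1 b (mem_filter.1 hb).1 hab]
  · rw [hL m hm]
    have hm := mem_Icc.1 (mem_filter.1 hm).1
    exact sum_ite_one_neg_one_nonpos (by simpa only [not_lt] using hpre m hm.1 hm.2)
  · exact hd' a (mem_filter.1 ha).1 b (mem_filter.1 hb).1 hab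
  · rw [hR m hm]
    have hm := mem_Icc.1 (mem_filter.1 hm).1
    exact sum_ite_one_neg_one_nonpos (by simpa only [not_lt] using hsuf m hm.1 hm.2)

end

theorem IsChainInterval.monotoneOn_sub {n : ℕ} {δ : ℝ} {x z : Fin n → ℝ} {i j : Fin n}
    (hc : IsChainInterval δ x i j)
    (hz : ∀ (k : ℕ) (h : k + 1 < n), δ ≤ z ⟨k + 1, h⟩ - z ⟨k, Nat.lt_of_succ_lt h⟩) :
    MonotoneOn (z - x) (Set.Icc i j) := by
  refine monotoneOn_of_le_succ Set.ordConnected_Icc fun a ha hai hsa => ?_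
  have hval : (Order.succ a).val = a + 1 :=
    (Nat.covBy_iff_add_one_eq.1 (Fin.covBy_iff.1 (Order.covBy_succ_of_not_isMax ha))).symm
  have hsucc : Order.succ a = ⟨a + 1, hval ▸ (Order.succ a).isLt⟩ := Fin.ext hval
  rw [hsucc] at hsa ⊢
  have hx := hc.2 a hai.1 (by simpa [Fin.le_def] using hsa.2)
  have := hz a (by omega)
  simp only [Pi.sub_apply]
  linarith

theorem sum_le_sum_of_isMaximalChain {n : ℕ} {δ : ℝ} {x f g : Fin n → ℝ}
    (hgap : ∀ (k : ℕ) (h : k + 1 < n), x ⟨k + 1, h⟩ - x ⟨k, Nat.lt_of_succ_lt h⟩ ≥ δ)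
    (hchain : ∀ i j, IsMaximalChain δ x i j → ∑ k ∈ Icc i j, f k ≤ ∑ k ∈ Icc i j, g k) :
    ∑ k, f k ≤ ∑ k, g k := by
  suffices key : ∀ m : ℕ, (∀ i : Fin n, (i : ℕ) = m →
      (i : ℕ) = 0 ∨ ∃ h : (i : ℕ) - 1 < n, x i - x ⟨(i : ℕ) - 1, h⟩ > δ) →
      ∑ k : Fin n with m ≤ k.val, f k ≤ ∑ k : Fin n with m ≤ k.val, g k by
    simpa using key 0 fun i hi => Or.inl hi
  intro m hm
  induction hs : n - m using Nat.strong_induction_on generalizing m with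
  | _ s ih =>
  obtain hnm | hmn := le_or_gt n m
  · rw [filter_false_of_mem fun k _ => by omega, sum_empty, sum_empty]
  -- The maximal chain starting at `m` ends at the first `e ≥ m` followed by a gap `> δ`.
  have hend : ∃ e, m ≤ e ∧ ∃ he : e < n,
      e + 1 = n ∨ ∃ h : e + 1 < n, x ⟨e + 1, h⟩ - x ⟨e, he⟩ > δ :=
    ⟨n - 1, by omega, by omega, Or.inl (by omega)⟩
  set e := Nat.find hend
  obtain ⟨hme, he, hright⟩ : m ≤ e ∧ _ := Nat.find_spec hend
  have hmax : IsMaximalChain δ x ⟨m, hmn⟩ ⟨e, he⟩ := by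
    refine ⟨⟨hme, fun k hmk hke => ?_⟩, hm _ rfl, hright⟩
    have := Nat.find_min hend hke
    push Not at this
    exact le_antisymm ((this hmk _).2 _) (hgap k _)
  have hsplit : ∀ F : Fin n → ℝ, ∑ k : Fin n with m ≤ k.val, F k
      = ∑ k ∈ Icc ⟨m, hmn⟩ ⟨e, he⟩, F k + ∑ k : Fin n with e + 1 ≤ k.val, F k := by
    intro F
    rw [← sum_union]
    · congr 1
      ext k
      simp only [mem_filter, mem_univ, true_and, mem_union, mem_Icc, Fin.le_def]
      omega
    · rw [disjoint_left]
      intro k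
      simp only [mem_filter, mem_univ, true_and, mem_Icc, Fin.le_def]
      omega
  rw [hsplit f, hsplit g]
  refine add_le_add (hchain _ _ hmax) (ih _ (by omega) _ (fun i hi => Or.inr ⟨by omega, ?_⟩) rfl)
  rcases hright with h | ⟨h, hgt⟩
  · omega
  · obtain rfl : i = ⟨e + 1, h⟩ := Fin.ext hi
    simpa using hgt

open Finset in
theorem properties_imply_optimal_general (n : ℕ) (δ : ℝ) (hδ : 0 < δ)
    (t : Fin n → ℝ) (ht : StrictMono t)
    (x : Fin n → ℝ)
    (hgap : ∀ (k : ℕ) (h : k + 1 < n),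
      x ⟨k + 1, h⟩ - x ⟨k, Nat.lt_of_succ_lt h⟩ ≥ δ)
    (hprefix : ∀ i j : Fin n, IsMaximalChain δ x i j →
      ∀ l : Fin n, i ≤ l → l ≤ j →
        ((Finset.Icc i l).filter (fun k => t k < x k)).card
          < ((Finset.Icc i l).filter (fun k => x k ≤ t k)).card)
    (hsuffix : ∀ i j : Fin n, IsMaximalChain δ x i j →
      ∀ l : Fin n, i ≤ l → l ≤ j →
        ((Finset.Icc l j).filter (fun k => x k < t k)).card
          ≤ ((Finset.Icc l j).filter (fun k => t k ≤ x k)).card) :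
    ∀ y : Fin n → ℝ, (∀ a b : Fin n, a ≠ b → |y a - y b| ≥ δ) →
      ∑ k, |t k - x k| ≤ ∑ k, |t k - y k| := by
  intro y hy
  have hy_inj : Function.Injective y := fun a b hab => by
    by_contra hne
    linarith [hy a b hne, abs_eq_zero.2 (sub_eq_zero.2 hab)]
  obtain ⟨σ, hz, hcost⟩ := exists_perm_strictMono_sum_abs_sub_le ht.monotone hy_inj
  have hzgap (k : ℕ) (h : k + 1 < n) :
      δ ≤ y (σ ⟨k + 1, h⟩) - y (σ ⟨k, Nat.lt_of_succ_lt h⟩) := by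
    have hlt : (⟨k, Nat.lt_of_succ_lt h⟩ : Fin n) < ⟨k + 1, h⟩ := Fin.mk_lt_mk.2 k.lt_succ_self
    have hzlt : y (σ _) < y (σ _) := hz hlt
    simpa [abs_of_pos (sub_pos.2 hzlt)] using hy (σ _) (σ _) (σ.injective.ne hlt.ne')
  refine le_trans (sum_le_sum_of_isMaximalChain hgap fun i j hij => ?_) hcost
  exact sum_abs_sub_le_of_monotoneOn_sub (z := y ∘ σ) (hij.1.monotoneOn_sub hzgap)
    (fun l hil hlj => (hprefix i j hij l hil hlj).le) (hsuffix i j hij)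

open Finset in
/-- If every prefix of every maximal chain of `x` satisfies Property 1
(|L| + |O| > |R|) and every suffix satisfies Property 2 (|L| ≤ |O| + |R|),
then `x` is an optimal solution of the movement-to-independence problem. -/
theorem properties_imply_optimal (n : ℕ) (δ : ℝ) (hδ : 0 < δ)
    (t : Fin n → ℝ) (ht : StrictMono t)
    (x : Fin n → ℝ) (hx : StrictMono x)
    (hgap : ∀ (k : ℕ) (h : k + 1 < n),
      x ⟨k + 1, h⟩ - x ⟨k, Nat.lt_of_succ_lt h⟩ ≥ δ)
    (hprefix : ∀ i j : Fin n, IsMaximalChain δ x i j →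
      ∀ l : Fin n, i ≤ l → l ≤ j →
        ((Finset.Icc i l).filter (fun k => t k < x k)).card
          < ((Finset.Icc i l).filter (fun k => x k ≤ t k)).card)
    (hsuffix : ∀ i j : Fin n, IsMaximalChain δ x i j →
      ∀ l : Fin n, i ≤ l → l ≤ j →
        ((Finset.Icc l j).filter (fun k => x k < t k)).card
          ≤ ((Finset.Icc l j).filter (fun k => t k ≤ x k)).card) :
    ∀ y : Fin n → ℝ, (∀ a b : Fin n, a ≠ b → |y a - y b| ≥ δ) →
      ∑ k, |t k - x k| ≤ ∑ k, |t k - y k| :=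
  properties_imply_optimal_general n δ hδ t ht x hgap hprefix hsuffix
end
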